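/- arXiv:2110.01118 — 7 statements merged into one kernel-verified Lean document; each statement's English description precedes it below -/
import Mathlib

section
/- Let F be a D₂-saturated family of subsets of [n] and let S be a minimal element of F. Then |F| ≥ |S|. -/
/-- Four sets form an induced copy of the diamond `D₂`:
`W ⊊ X ⊊ Z`, `W ⊊ Y ⊊ Z`, with `X` and `Y` incomparable. -/
def IsDiamond {α : Type*} (W X Y Z : Finset α) : Prop :=
  W ⊂ X ∧ X ⊂ Z ∧ W ⊂ Y ∧ Y ⊂ Z ∧ ¬ X ⊆ Y ∧ ¬ Y ⊆ X

/-- A family contains an induced copy of the diamond. -/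
def ContainsDiamond {α : Type*} (F : Finset (Finset α)) : Prop :=
  ∃ W ∈ F, ∃ X ∈ F, ∃ Y ∈ F, ∃ Z ∈ F, IsDiamond W X Y Z

/-- A family is diamond-free. -/
def DiamondFree {α : Type*} (F : Finset (Finset α)) : Prop :=
  ¬ ContainsDiamond F

/-- A family of subsets of `[n]` is `D₂`-saturated. -/
def Saturated (n : ℕ) (F : Finset (Finset (Fin n))) : Prop :=
  DiamondFree F ∧ ∀ S : Finset (Fin n), S ∉ F → ContainsDiamond (insert S F)

/-- `S` is a minimal element of the family `F`. -/
def MinimalIn {α : Type*} (F : Finset (Finset α)) (S : Finset α) : Prop :=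
  S ∈ F ∧ ∀ T ∈ F, ¬ T ⊂ S

/-- `S` is a maximal element of the family `F`. -/
def MaximalIn {α : Type*} (F : Finset (Finset α)) (S : Finset α) : Prop :=
  S ∈ F ∧ ∀ T ∈ F, ¬ S ⊂ T

/-- `(B, A)` is an `i`-configuration for `F`, `S`, `i`:
`S ⊊ B ⊊ A`, `S ∪ {i} ⊊ A`, and `B` is incomparable with `S ∪ {i}`. -/
def IConfig {n : ℕ} (F : Finset (Finset (Fin n))) (S : Finset (Fin n)) (i : Fin n)
    (B A : Finset (Fin n)) : Prop :=
  B ∈ F ∧ A ∈ F ∧ S ⊂ B ∧ B ⊂ A ∧ insert i S ⊂ A ∧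
    ¬ B ⊆ insert i S ∧ ¬ insert i S ⊆ B

/-- An `i`-configuration `(B, A)` is extremal: `B` has maximal cardinality among all
`i`-configurations, and `A` has minimal cardinality among `i`-configurations of the
form `(B, A')`. -/
def ExtremalIConfig {n : ℕ} (F : Finset (Finset (Fin n))) (S : Finset (Fin n)) (i : Fin n)
    (B A : Finset (Fin n)) : Prop :=
  IConfig F S i B A ∧
    (∀ B' A' : Finset (Fin n), IConfig F S i B' A' → B'.card ≤ B.card) ∧
    (∀ A' : Finset (Fin n), IConfig F S i B A' → A.card ≤ A'.card)

/-- `(X, Y, N)` is an `i`-witness for `B`: `X, Y, N ∈ F`, `N ⊊ B ∪ {i} ⊊ X`,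
`N ⊊ Y ⊊ X`, and `Y` is incomparable with `B ∪ {i}`. -/
def IWitness {n : ℕ} (F : Finset (Finset (Fin n))) (B : Finset (Fin n)) (i : Fin n)
    (X Y N : Finset (Fin n)) : Prop :=
  X ∈ F ∧ Y ∈ F ∧ N ∈ F ∧ N ⊂ insert i B ∧ insert i B ⊂ X ∧ N ⊂ Y ∧ Y ⊂ X ∧
    ¬ Y ⊆ insert i B ∧ ¬ insert i B ⊆ Y

/-!
For `i ∈ S` the set `S \ {i}` is not in `F` by minimality of `S`, so adding it creates a diamond.
Nothing in `F` lies below `S \ {i}`, so it is the bottom of that diamond, and the two middle sets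
cannot both contain `i`: otherwise `S` itself would be the bottom of a diamond inside `F`. This
gives for each `i ∈ S` some `U i ∈ F` with `S \ {i} ⊆ U i` and `i ∉ U i`, and `U` is injective.
-/

section Diamond

variable {α : Type*} {F : Finset (Finset α)} {T V W X Y Z : Finset α}

theorem IsDiamond.of_subset_of_subset (h : IsDiamond W X Y Z) (hX : V ⊆ X) (hY : V ⊆ Y) :
    IsDiamond V X Y Z := by
  obtain ⟨-, hXZ, -, hYZ, hXY, hYX⟩ := h
  refine ⟨hX.ssubset_of_ne ?_, hXZ, hY.ssubset_of_ne ?_, hYZ, hXY, hYX⟩ <;> rintro rfl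
  exacts [hXY hY, hYX hX]

variable [DecidableEq α]

theorem DiamondFree.exists_isDiamond_of_containsDiamond_insert (hfree : DiamondFree F)
    (hT : ∀ U ∈ F, ¬ U ⊂ T) (h : ContainsDiamond (insert T F)) :
    ∃ X ∈ F, ∃ Y ∈ F, ∃ Z ∈ F, IsDiamond T X Y Z := by
  obtain ⟨W, hW, X, hX, Y, hY, Z, hZ, hd⟩ := h
  have not_below_T : ¬ W ⊂ T := by
    rcases Finset.mem_insert.1 hW with rfl | hWF
    exacts [lt_irrefl W, hT W hWF]
  have above_mem : ∀ V ∈ insert T F, W ⊂ V → V ∈ F := fun V hV hWV =>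
    (Finset.mem_insert.1 hV).resolve_left fun hVT => not_below_T (hVT ▸ hWV)
  have hXF := above_mem X hX hd.1
  have hYF := above_mem Y hY hd.2.2.1
  have hZF := above_mem Z hZ (hd.1.trans hd.2.1)
  rcases Finset.mem_insert.1 hW with rfl | hWF
  · exact ⟨X, hXF, Y, hYF, Z, hZF, hd⟩
  · exact absurd ⟨W, hWF, X, hXF, Y, hYF, Z, hZF, hd⟩ hfree

theorem DiamondFree.not_mem_or_not_mem_of_isDiamond_erase (hfree : DiamondFree F) {S : Finset α}
    {i : α} (hSF : S ∈ F) (hi : i ∈ S) (hX : X ∈ F) (hY : Y ∈ F) (hZ : Z ∈ F)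
    (hd : IsDiamond (S.erase i) X Y Z) : i ∉ X ∨ i ∉ Y := by
  by_contra! ⟨hiX, hiY⟩
  have hSX : S ⊆ X := Finset.insert_erase hi ▸ Finset.insert_subset hiX hd.1.subset
  have hSY : S ⊆ Y := Finset.insert_erase hi ▸ Finset.insert_subset hiY hd.2.2.1.subset
  exact hfree ⟨S, hSF, X, hX, Y, hY, Z, hZ, hd.of_subset_of_subset hSX hSY⟩

end Diamond

theorem Finset.card_le_card_of_forall_exists_erase_subset {α : Type*} [DecidableEq α]
    {S : Finset α} {G : Finset (Finset α)} (h : ∀ i ∈ S, ∃ U ∈ G, S.erase i ⊆ U ∧ i ∉ U) :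
    S.card ≤ G.card := by
  choose! U hUG hSU hiU using h
  refine Finset.card_le_card_of_injOn U hUG fun i hi j hj hij => ?_
  by_contra hne
  exact hiU i hi (hij ▸ hSU j hj (Finset.mem_erase.2 ⟨hne, hi⟩))

theorem Saturated.exists_erase_subset_not_mem {n : ℕ} {F : Finset (Finset (Fin n))}
    {S : Finset (Fin n)} (hF : Saturated n F) (hS : MinimalIn F S) {i : Fin n} (hi : i ∈ S) :
    ∃ U ∈ F, S.erase i ⊆ U ∧ i ∉ U := by
  have below : ∀ U ∈ F, ¬ U ⊂ S.erase i := fun U hU hUT =>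
    hS.2 U hU (hUT.trans (Finset.erase_ssubset hi))
  obtain ⟨X, hX, Y, hY, Z, hZ, hd⟩ := hF.1.exists_isDiamond_of_containsDiamond_insert below
    (hF.2 _ fun hT => hS.2 _ hT (Finset.erase_ssubset hi))
  rcases hF.1.not_mem_or_not_mem_of_isDiamond_erase hS.1 hi hX hY hZ hd with hiX | hiY
  exacts [⟨X, hX, hd.1.subset, hiX⟩, ⟨Y, hY, hd.2.2.1.subset, hiY⟩]

theorem statement_1 {n : ℕ} (F : Finset (Finset (Fin n))) (S : Finset (Fin n))
    (hF : Saturated n F) (hS : MinimalIn F S) :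
    S.card ≤ F.card := by
  exact Finset.card_le_card_of_forall_exists_erase_subset fun _ hi =>
    hF.exists_erase_subset_not_mem hS hi
end

section
/- Claim A: Let F be a D₂-saturated family of subsets of [n], S a minimal element of F, and i, j ∈ [n] ∖ S with i ≠ j. Let (B_i, A_i) be an extremal i-configuration and (B_j, A_j) an extremal j-configuration. Then B_i ∪ {i} ≠ B_j ∪ {j}. -/
/-!
If `B_i ∪ {i} = B_j ∪ {j}` with `i ≠ j`, then `j ∈ B_i` and `i ∈ B_j`, so `B_i` and `B_j` are
incomparable, and `B_j ⊆ B_i ∪ {i} ⊆ A_i`. Hence `S, B_i, B_j, A_i` is an induced diamond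
already in `F`, contradicting diamond-freeness.
-/

open Finset

theorem IConfig.notMem {n : ℕ} {F : Finset (Finset (Fin n))} {S B A : Finset (Fin n)}
    {i : Fin n} (h : IConfig F S i B A) : i ∉ B :=
  fun hiB => h.2.2.2.2.2.2 (insert_subset hiB h.2.2.1.subset)

theorem isDiamond_of_insert_eq_insert {α : Type*} [DecidableEq α] {S B C A : Finset α}
    {i j : α} (hSB : S ⊂ B) (hSC : S ⊂ C) (hBA : B ⊂ A) (hiA : i ∈ A) (hiB : i ∉ B)
    (hjC : j ∉ C) (hij : i ≠ j) (h : insert i B = insert j C) : IsDiamond S B C A := by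
  have hjB : j ∈ B := mem_of_mem_insert_of_ne (h ▸ mem_insert_self j C) hij.symm
  have hiC : i ∈ C := mem_of_mem_insert_of_ne (h.symm ▸ mem_insert_self i B) hij
  have hCA : C ⊆ A :=
    (subset_insert j C).trans (h ▸ insert_subset hiA hBA.subset)
  exact ⟨hSB, hBA, hSC, ⟨hCA, fun hAC => hjC (hAC (hBA.subset hjB))⟩,
    fun hBC => hjC (hBC hjB), fun hCB => hiB (hCB hiC)⟩

theorem statement_4_general {n : ℕ} (F : Finset (Finset (Fin n))) (S : Finset (Fin n))
    (i j : Fin n) (Bi Ai Bj Aj : Finset (Fin n))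
    (hF : Saturated n F) (hS : MinimalIn F S)
    (hij : i ≠ j)
    (hBi : ExtremalIConfig F S i Bi Ai) (hBj : ExtremalIConfig F S j Bj Aj) :
    insert i Bi ≠ insert j Bj := by
  intro heq
  obtain ⟨hi, -, -⟩ := hBi
  obtain ⟨hj, -, -⟩ := hBj
  obtain ⟨hBiF, hAiF, hSBi, hBiAi, hiSAi, -, -⟩ := id hi
  obtain ⟨hBjF, -, hSBj, -⟩ := id hj
  exact hF.1 ⟨S, hS.1, Bi, hBiF, Bj, hBjF, Ai, hAiF,
    isDiamond_of_insert_eq_insert hSBi hSBj hBiAi (hiSAi.subset (mem_insert_self i S))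
      hi.notMem hj.notMem hij heq⟩

theorem statement_4 {n : ℕ} (F : Finset (Finset (Fin n))) (S : Finset (Fin n))
    (i j : Fin n) (Bi Ai Bj Aj : Finset (Fin n))
    (hF : Saturated n F) (hS : MinimalIn F S)
    (hi : i ∉ S) (hj : j ∉ S) (hij : i ≠ j)
    (hBi : ExtremalIConfig F S i Bi Ai) (hBj : ExtremalIConfig F S j Bj Aj) :
    insert i Bi ≠ insert j Bj :=
  statement_4_general F S i j Bi Ai Bj Aj hF hS hij hBi hBj
end

section
/- Claim B: Let F be a D₂-saturated family of subsets of [n], S a minimal element of F, i ∈ [n] ∖ S, and (B_i, A_i) an extremal i-configuration with B_i ∪ {i} ∉ F. Let (X, Y, N) be an i-witness. Then B_i and N are incomparable (neither N ⊆ B_i nor B_i ⊆ N). -/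
/-!
If `B_i ⊆ Y`, then `(Y, X)` would be an `i`-configuration with `|Y| > |B_i|`, against the
extremality of `B_i`; so `B_i ⊄ Y`. Now `N ⊆ B_i` would give the diamond `N ⊊ B_i, Y ⊊ X`
inside `F`, while `B_i ⊆ N ⊊ B_i ∪ {i}` forces `N = B_i ⊆ Y`.
-/

section

variable {n : ℕ} {F : Finset (Finset (Fin n))} {S : Finset (Fin n)} {i : Fin n}
  {B A X Y N : Finset (Fin n)}

theorem IConfig.of_iWitness (hBA : IConfig F S i B A) (hW : IWitness F B i X Y N)
    (hBY : B ⊆ Y) : IConfig F S i Y X := by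
  obtain ⟨-, -, hSB, -, -, hBiS, -⟩ := hBA
  obtain ⟨hXF, hYF, -, -, hiBX, -, hYX, -, hiBY⟩ := hW
  have hBX : B ⊆ X := (Finset.subset_insert i B).trans hiBX.1
  have hiX : i ∈ X := hiBX.1 (Finset.mem_insert_self i B)
  have hiY : i ∉ Y := fun h => hiBY (Finset.insert_subset h hBY)
  refine ⟨hYF, hXF, hSB.trans_subset hBY, hYX, ?_, fun h => hBiS (hBY.trans h),
    fun h => hiY (h (Finset.mem_insert_self i S))⟩
  exact ⟨Finset.insert_subset hiX (hSB.1.trans hBX), fun h => hBiS (hBX.trans h)⟩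

theorem IWitness.not_subset_base (hW : IWitness F B i X Y N) : ¬ Y ⊆ B :=
  fun hYB => hW.2.2.2.2.2.2.2.1 (hYB.trans (Finset.subset_insert i B))

theorem ExtremalIConfig.not_subset_iWitness (hBA : ExtremalIConfig F S i B A)
    (hW : IWitness F B i X Y N) : ¬ B ⊆ Y := fun hBY =>
  (Finset.card_lt_card ⟨hBY, hW.not_subset_base⟩).not_ge
    (hBA.2.1 Y X (hBA.1.of_iWitness hW hBY))

theorem IWitness.isDiamond_of_subset (hW : IWitness F B i X Y N) (hBY : ¬ B ⊆ Y)
    (hNB : N ⊆ B) : IsDiamond N B Y X := by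
  have hYB : ¬ Y ⊆ B := hW.not_subset_base
  obtain ⟨-, -, -, -, hiBX, hNY, hYX, -, -⟩ := hW
  exact ⟨⟨hNB, fun hBN => hBY (hBN.trans hNY.1)⟩,
    (Finset.subset_insert i B).trans_ssubset hiBX, hNY, hYX, hBY, hYB⟩

theorem IWitness.eq_of_subset (hW : IWitness F B i X Y N) (hBN : B ⊆ N) : N = B :=
  ((Finset.wcovBy_insert B i).eq_or_eq hBN hW.2.2.2.1.1).resolve_right hW.2.2.2.1.ne

end

theorem statement_5_general {n : ℕ} (F : Finset (Finset (Fin n))) (S : Finset (Fin n))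
    (i : Fin n) (Bi Ai X Y N : Finset (Fin n))
    (hF : Saturated n F)
    (hBi : ExtremalIConfig F S i Bi Ai)
    (hW : IWitness F Bi i X Y N) :
    ¬ N ⊆ Bi ∧ ¬ Bi ⊆ N := by
  have hBY : ¬ Bi ⊆ Y := hBi.not_subset_iWitness hW
  refine ⟨fun hNB => hF.1 ?_, fun hBN => hBY ?_⟩
  · exact ⟨N, hW.2.2.1, Bi, hBi.1.1, Y, hW.2.1, X, hW.1, hW.isDiamond_of_subset hBY hNB⟩
  · exact hW.eq_of_subset hBN ▸ hW.2.2.2.2.2.1.1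

theorem statement_5 {n : ℕ} (F : Finset (Finset (Fin n))) (S : Finset (Fin n))
    (i : Fin n) (Bi Ai X Y N : Finset (Fin n))
    (hF : Saturated n F) (hS : MinimalIn F S) (hi : i ∉ S)
    (hBi : ExtremalIConfig F S i Bi Ai) (hBiF : insert i Bi ∉ F)
    (hW : IWitness F Bi i X Y N) :
    ¬ N ⊆ Bi ∧ ¬ Bi ⊆ N :=
  statement_5_general F S i Bi Ai X Y N hF hBi hW
end

section
/- Claim D: Let F be a D₂-saturated family of subsets of [n], S a minimal element of F, and i, j ∈ [n] ∖ S with i ≠ j. Let (B_i, A_i) be an extremal i-configuration and (B_j, A_j) an extremal j-configuration. If B_i ≠ B_j, then A_i ≠ A_j. -/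
/-- A member `B'` of `F` strictly between `B` and `A` would give either the configuration
`(B, B')` with a smaller top or `(B', A)` with a larger bottom. -/
theorem ExtremalIConfig.not_mem_between {n : ℕ} {F : Finset (Finset (Fin n))}
    {S B A B' : Finset (Fin n)} {i : Fin n} (h : ExtremalIConfig F S i B A)
    (hB' : B' ∈ F) (hBB' : B ⊂ B') (hB'A : B' ⊂ A) : False := by
  obtain ⟨⟨hB, hA, hSB, -, hiA, hBi, hiB⟩, hmaxB, hminA⟩ := h
  by_cases hiB' : insert i S ⊆ B'
  · have hc : IConfig F S i B B' :=
      ⟨hB, hB', hSB, hBB', ⟨hiB', fun h => hBi (hBB'.subset.trans h)⟩, hBi, hiB⟩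
    exact (hminA B' hc).not_gt (Finset.card_lt_card hB'A)
  · have hc : IConfig F S i B' A :=
      ⟨hB', hA, hSB.trans hBB', hB'A, hiA, fun h => hBi (hBB'.subset.trans h), hiB'⟩
    exact (hmaxB B' A hc).not_gt (Finset.card_lt_card hBB')

theorem statement_8_general {n : ℕ} (F : Finset (Finset (Fin n))) (S : Finset (Fin n))
    (i j : Fin n) (Bi Ai Bj Aj : Finset (Fin n))
    (hF : Saturated n F) (hS : MinimalIn F S)
    (hBi : ExtremalIConfig F S i Bi Ai) (hBj : ExtremalIConfig F S j Bj Aj)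
    (hne : Bi ≠ Bj) :
    Ai ≠ Aj := by
  rintro rfl
  obtain ⟨hBiF, hAF, hSBi, hBiA, -⟩ := hBi.1
  obtain ⟨hBjF, -, hSBj, hBjA, -⟩ := hBj.1
  by_cases hij : Bi ⊆ Bj
  · exact hBi.not_mem_between hBjF (hij.ssubset_of_ne hne) hBjA
  by_cases hji : Bj ⊆ Bi
  · exact hBj.not_mem_between hBiF (hji.ssubset_of_ne hne.symm) hBiA
  -- `Bi` and `Bj` are incomparable, so `S, Bi, Bj, Ai` is a diamond in `F`.
  exact hF.1 ⟨S, hS.1, Bi, hBiF, Bj, hBjF, Ai, hAF, hSBi, hBiA, hSBj, hBjA, hij, hji⟩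

theorem statement_8 {n : ℕ} (F : Finset (Finset (Fin n))) (S : Finset (Fin n))
    (i j : Fin n) (Bi Ai Bj Aj : Finset (Fin n))
    (hF : Saturated n F) (hS : MinimalIn F S)
    (hi : i ∉ S) (hj : j ∉ S) (hij : i ≠ j)
    (hBi : ExtremalIConfig F S i Bi Ai) (hBj : ExtremalIConfig F S j Bj Aj)
    (hne : Bi ≠ Bj) :
    Ai ≠ Aj :=
  statement_8_general F S i j Bi Ai Bj Aj hF hS hBi hBj hne
end

section
/- Claim E: Let F be a D₂-saturated family of subsets of [n] with ∅ ∉ F and [n] ∉ F. Then there exist a minimal element P of F and a maximal element R of F such that P and R are incomparable (neither P ⊆ R nor R ⊆ P). -/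
section

variable {α : Type*} {F : Finset (Finset α)} {S A B P : Finset α}

theorem minimalIn_iff_minimal : MinimalIn F S ↔ Minimal (· ∈ F) S :=
  ⟨fun h => minimal_iff_forall_lt.2 ⟨h.1, fun T hTS hT => h.2 T hT hTS⟩,
    fun h => ⟨h.prop, fun _ hT hTS => (minimal_iff_forall_lt.1 h).2 hTS hT⟩⟩

theorem maximalIn_iff_maximal : MaximalIn F S ↔ Maximal (· ∈ F) S :=
  ⟨fun h => maximal_iff_forall_gt.2 ⟨h.1, fun T hST hT => h.2 T hT hST⟩,
    fun h => ⟨h.prop, fun _ hT hST => (maximal_iff_forall_gt.1 h).2 hST hT⟩⟩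

theorem exists_minimalIn_subset (hA : A ∈ F) : ∃ P, MinimalIn F P ∧ P ⊆ A := by
  obtain ⟨P, hPA, hP⟩ := F.exists_le_minimal hA
  exact ⟨P, minimalIn_iff_minimal.2 hP, hPA⟩

theorem exists_maximalIn_superset (hA : A ∈ F) : ∃ R, MaximalIn F R ∧ A ⊆ R := by
  obtain ⟨R, hAR, hR⟩ := F.exists_le_maximal hA
  exact ⟨R, maximalIn_iff_maximal.2 hR, hAR⟩

theorem MinimalIn.subset_of_subset (hP : MinimalIn F P) (hA : A ∈ F) (hAP : A ⊆ P) : P ⊆ A :=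
  (minimalIn_iff_minimal.1 hP).2 hA hAP

theorem exists_forall_incomparable_of_forall_minimalIn_subset_maximalIn [Fintype α]
    (hempty : ∅ ∉ F) (hfull : Finset.univ ∉ F)
    (hle : ∀ P R, MinimalIn F P → MaximalIn F R → P ⊆ R) :
    ∃ S, ∀ T ∈ F, ¬ T ⊆ S ∧ ¬ S ⊆ T := by
  classical
  refine ⟨Finset.univ.filter fun x => ∃ R, MaximalIn F R ∧ x ∉ R, fun T hT => ⟨?_, ?_⟩⟩
  · intro hTS
    obtain ⟨P, hP, hPT⟩ := exists_minimalIn_subset hT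
    obtain ⟨x, hx⟩ := Finset.nonempty_iff_ne_empty.2 fun h => hempty (h ▸ hP.1)
    obtain ⟨R, hR, hxR⟩ := (Finset.mem_filter.1 (hTS (hPT hx))).2
    exact hxR (hle P R hP hR hx)
  · intro hST
    obtain ⟨M, hM, hTM⟩ := exists_maximalIn_superset hT
    obtain ⟨x, hxM⟩ : ∃ x, x ∉ M := by
      by_contra! h
      exact hfull (Finset.eq_univ_iff_forall.2 h ▸ hM.1)
    exact hxM (hTM (hST (Finset.mem_filter.2 ⟨Finset.mem_univ x, M, hM, hxM⟩)))

variable [DecidableEq α]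

theorem mem_of_ssubset_of_mem_insert (hS : ∀ T ∈ F, ¬ T ⊆ S ∧ ¬ S ⊆ T)
    (hA : A ∈ insert S F) (hB : B ∈ insert S F) (hAB : A ⊂ B) : A ∈ F ∧ B ∈ F := by
  rcases Finset.mem_insert.1 hA with rfl | hAF <;> rcases Finset.mem_insert.1 hB with rfl | hBF
  · exact absurd hAB (lt_irrefl _)
  · exact absurd hAB.subset (hS B hBF).2
  · exact absurd hAB.subset (hS A hAF).1
  · exact ⟨hAF, hBF⟩

theorem ContainsDiamond.of_insert_of_forall_incomparable
    (hS : ∀ T ∈ F, ¬ T ⊆ S ∧ ¬ S ⊆ T) (h : ContainsDiamond (insert S F)) :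
    ContainsDiamond F := by
  obtain ⟨W, hW, X, hX, Y, hY, Z, hZ, hD⟩ := h
  obtain ⟨hWF, hXF⟩ := mem_of_ssubset_of_mem_insert hS hW hX hD.1
  obtain ⟨hYF, hZF⟩ := mem_of_ssubset_of_mem_insert hS hY hZ hD.2.2.2.1
  exact ⟨W, hWF, X, hXF, Y, hYF, Z, hZF, hD⟩

end

theorem statement_9 {n : ℕ} (F : Finset (Finset (Fin n)))
    (hF : Saturated n F) (hempty : ∅ ∉ F) (hfull : Finset.univ ∉ F) :
    ∃ P R : Finset (Fin n), MinimalIn F P ∧ MaximalIn F R ∧ ¬ P ⊆ R ∧ ¬ R ⊆ P := by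
  by_contra! hcomp
  have hle : ∀ P R, MinimalIn F P → MaximalIn F R → P ⊆ R := fun P R hP hR => by
    by_contra hPR
    exact hPR (hP.subset_of_subset hR.1 (hcomp P R hP hR hPR))
  obtain ⟨S, hS⟩ :=
    exists_forall_incomparable_of_forall_minimalIn_subset_maximalIn hempty hfull hle
  have hSF : S ∉ F := fun h => (hS S h).1 subset_rfl
  exact hF.1 ((hF.2 S hSF).of_insert_of_forall_incomparable hS)
end

section
/- Let F be a D₂-saturated family of subsets of [n] with ∅ ∉ F, and let i, j ∈ [n] with i ≠ j. Then there exists T ∈ F with {i, j} ⊆ T. -/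
/-!
Since `{i, j}` is not in `F`, adding it creates a diamond, which must use `{i, j}`. Anywhere but at
the top, `{i, j}` lies strictly below the top of that diamond, a member of `F`. At the top it would
sit above a chain `W ⊊ X` of members of `F`, forcing `W = ∅`.
-/

open Finset

theorem eq_empty_of_ssubset_of_ssubset_of_card_le_two {α : Type*} {W X S : Finset α}
    (hWX : W ⊂ X) (hXS : X ⊂ S) (hS : #S ≤ 2) : W = ∅ := by
  have := card_lt_card hWX
  have := card_lt_card hXS
  exact card_eq_zero.1 (by omega)

theorem DiamondFree.exists_ssuperset_or_chain_below {α : Type*} [DecidableEq α]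
    {F : Finset (Finset α)} {S : Finset α} (hF : DiamondFree F)
    (hS : ContainsDiamond (insert S F)) :
    (∃ T ∈ F, S ⊂ T) ∨ ∃ W ∈ F, ∃ X ∈ F, W ⊂ X ∧ X ⊂ S := by
  obtain ⟨W, hW, X, hX, Y, hY, Z, hZ, hd⟩ := hS
  have ⟨hWX, hXZ, _, hYZ, _⟩ := hd
  rcases mem_insert.1 hZ with rfl | hZ
  · exact Or.inr ⟨W, mem_of_mem_insert_of_ne hW (hWX.trans hXZ).ne, X,
      mem_of_mem_insert_of_ne hX hXZ.ne, hWX, hXZ⟩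
  refine or_iff_not_imp_left.2 fun hnot => (hF ?_).elim
  push Not at hnot
  have below : ∀ T ∈ insert S F, T ⊂ Z → T ∈ F := fun T hT hTZ =>
    (mem_insert.1 hT).resolve_left fun hTS => hnot Z hZ (hTS ▸ hTZ)
  exact ⟨W, below W hW (hWX.trans hXZ), X, below X hX hXZ, Y, below Y hY hYZ, Z, hZ, hd⟩

theorem statement_10 {n : ℕ} (F : Finset (Finset (Fin n)))
    (hF : Saturated n F) (hempty : ∅ ∉ F)
    (i j : Fin n) (hij : i ≠ j) :
    ∃ T ∈ F, ({i, j} : Finset (Fin n)) ⊆ T := by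
  by_cases hmem : ({i, j} : Finset (Fin n)) ∈ F
  · exact ⟨_, hmem, subset_rfl⟩
  rcases hF.1.exists_ssuperset_or_chain_below (hF.2 _ hmem) with
    ⟨T, hT, hsub⟩ | ⟨W, hW, X, -, hWX, hXS⟩
  · exact ⟨T, hT, hsub.subset⟩
  · exact absurd (eq_empty_of_ssubset_of_ssubset_of_card_le_two hWX hXS (card_pair hij).le ▸ hW)
      hempty
end

section
/- Let F be a diamond-free family of subsets of [n] and S a minimal element of F. Then the number of i ∈ [n] ∖ S for which there exist W, X, Y ∈ F with W ⊊ X ⊊ S ∪ {i}, W ⊊ Y ⊊ S ∪ {i}, and X, Y incomparable (i.e., S ∪ {i} is the maximal element of an induced copy of D₂ whose other three elements lie in F) is at most |F|. -/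
/-! The set `X` from the diamond lies below `S ∪ {i}` and strictly above a member of `F`, so by
minimality of `S` it contains `i`; hence `X \ S = {i}`. Distinct `i` thus give distinct members
`X` of `F`. -/

section

variable {α : Type*} [DecidableEq α]

theorem MinimalIn.mem_of_ssubset_of_subset_insert {F : Finset (Finset α)} {S W X : Finset α}
    {i : α} (hS : MinimalIn F S) (hW : W ∈ F) (hWX : W ⊂ X) (hX : X ⊆ insert i S) : i ∈ X := by
  by_contra hiX
  have hXS : X ⊆ S := fun x hx =>
    (Finset.mem_insert.mp (hX hx)).resolve_left fun hxi => hiX (hxi ▸ hx)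
  exact hS.2 W hW (hWX.trans_subset hXS)

theorem sdiff_eq_singleton_of_mem_of_subset_insert {S X : Finset α} {i : α} (hiS : i ∉ S)
    (hiX : i ∈ X) (hX : X ⊆ insert i S) : X \ S = {i} := by
  ext x
  simp only [Finset.mem_sdiff, Finset.mem_singleton]
  constructor
  · rintro ⟨hxX, hxS⟩
    exact (Finset.mem_insert.mp (hX hxX)).resolve_right hxS
  · rintro rfl
    exact ⟨hiX, hiS⟩

theorem MinimalIn.exists_sdiff_eq_singleton_of_isDiamond {F : Finset (Finset α)}
    {S W X Y : Finset α} {i : α} (hS : MinimalIn F S) (hiS : i ∉ S) (hW : W ∈ F) (hX : X ∈ F)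
    (hD : IsDiamond W X Y (insert i S)) : ∃ X ∈ F, X \ S = {i} :=
  ⟨X, hX, sdiff_eq_singleton_of_mem_of_subset_insert hiS
    (hS.mem_of_ssubset_of_subset_insert hW hD.1 hD.2.1.subset) hD.2.1.subset⟩

theorem ncard_setOf_exists_sdiff_eq_singleton_le (F : Finset (Finset α)) (S : Finset α) :
    {i : α | ∃ X ∈ F, X \ S = {i}}.ncard ≤ F.card :=
  calc {i : α | ∃ X ∈ F, X \ S = {i}}.ncard
      ≤ ((F.image (· \ S) : Finset (Finset α)) : Set (Finset α)).ncard :=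
        Set.ncard_le_ncard_of_injOn (fun i => {i})
          (fun i ⟨X, hX, hXS⟩ => Finset.mem_coe.mpr (Finset.mem_image.mpr ⟨X, hX, hXS⟩))
          (Finset.singleton_injective.injOn)
    _ = (F.image (· \ S)).card := Set.ncard_coe_finset _
    _ ≤ F.card := Finset.card_image_le

end

theorem statement_14_general {n : ℕ} (F : Finset (Finset (Fin n))) (S : Finset (Fin n))
    (hS : MinimalIn F S) :
    {i : Fin n | i ∉ S ∧ ∃ W ∈ F, ∃ X ∈ F, ∃ Y ∈ F,
      IsDiamond W X Y (insert i S)}.ncard ≤ F.card := by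
  refine le_trans (Set.ncard_le_ncard ?_ (Set.toFinite _))
    (ncard_setOf_exists_sdiff_eq_singleton_le F S)
  rintro i ⟨hiS, W, hW, X, hX, Y, -, hD⟩
  exact hS.exists_sdiff_eq_singleton_of_isDiamond hiS hW hX hD

theorem statement_14 {n : ℕ} (F : Finset (Finset (Fin n))) (S : Finset (Fin n))
    (hF : DiamondFree F) (hS : MinimalIn F S) :
    {i : Fin n | i ∉ S ∧ ∃ W ∈ F, ∃ X ∈ F, ∃ Y ∈ F,
      IsDiamond W X Y (insert i S)}.ncard ≤ F.card :=
  statement_14_general F S hS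
end
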